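/- The 7×7 symmetric matrix Q with rows [5/2, -1/2, -1/2, -1/2, -2, -2, -2], [-1/2, 5/2, -1/2, -1/2, 10/3, -2/3, -2/3], [-1/2, -1/2, 5/2, -1/2, -2/3, 10/3, -2/3], [-1/2, -1/2, -1/2, 5/2, -2/3, -2/3, 10/3], [-2, 10/3, -2/3, -2/3, 22/3, -2/3, -2/3], [-2, -2/3, 10/3, -2/3, -2/3, 22/3, -2/3], [-2, -2/3, -2/3, 10/3, -2/3, -2/3, 22/3] is positive definite. -/

import Mathlib

open Matrix

/-- The 7×7 matrix from the divergence formula in the qc Yamabe problem. -/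
noncomputable def Qmat : Matrix (Fin 7) (Fin 7) ℝ :=
  !![5/2, -1/2, -1/2, -1/2, -2, -2, -2;
     -1/2, 5/2, -1/2, -1/2, 10/3, -2/3, -2/3;
     -1/2, -1/2, 5/2, -1/2, -2/3, 10/3, -2/3;
     -1/2, -1/2, -1/2, 5/2, -2/3, -2/3, 10/3;
     -2, 10/3, -2/3, -2/3, 22/3, -2/3, -2/3;
     -2, -2/3, 10/3, -2/3, -2/3, 22/3, -2/3;
     -2, -2/3, -2/3, 10/3, -2/3, -2/3, 22/3]

/-!
Symmetric Gaussian elimination on `Qmat` produces only positive pivots, i.e. `Qmat = Uᵀ D U`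
with `U` upper unitriangular and `D` diagonal with positive entries. Since `U` is invertible,
`xᵀ Qmat x = (U x)ᵀ D (U x) > 0` for `x ≠ 0`.
-/

theorem Matrix.posDef_conjTranspose_mul_diagonal_mul {n R : Type*} [Fintype n] [DecidableEq n]
    [Ring R] [PartialOrder R] [StarRing R] [StarOrderedRing R] [NoZeroDivisors R]
    {d : n → R} (hd : ∀ i, 0 < d i) {U : Matrix n n R} (hU : IsUnit U) :
    (Uᴴ * diagonal d * U).PosDef :=
  (PosDef.diagonal hd).conjTranspose_mul_mul_same (mulVec_injective_of_isUnit hU)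

noncomputable def QmatLDLFactor : Matrix (Fin 7) (Fin 7) ℝ :=
  !![1, -1/5, -1/5, -1/5, -4/5, -4/5, -4/5;
     0, 1, -1/4, -1/4, 11/9, -4/9, -4/9;
     0, 0, 1, -1/3, -4/27, 32/27, -16/27;
     0, 0, 0, 1, -2/9, -2/9, 10/9;
     0, 0, 0, 0, 1, -1/3, -1/3;
     0, 0, 0, 0, 0, 1, -1/2;
     0, 0, 0, 0, 0, 0, 1]

noncomputable def QmatLDLPivots : Fin 7 → ℝ := ![5/2, 12/5, 9/4, 2, 2, 16/9, 4/3]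

theorem QmatLDLPivots_pos (i : Fin 7) : 0 < QmatLDLPivots i := by
  fin_cases i <;> norm_num [QmatLDLPivots]

theorem QmatLDLFactor_det : QmatLDLFactor.det = 1 := by
  rw [det_of_isUpperTriangular fun i j hji => ?_]
  · simp [Fin.prod_univ_seven, QmatLDLFactor]
  · fin_cases i <;> fin_cases j <;> simp_all [QmatLDLFactor]

theorem Qmat_eq_LDL : Qmat = QmatLDLFactorᵀ * diagonal QmatLDLPivots * QmatLDLFactor := by
  ext i j
  simp only [mul_apply, Fin.sum_univ_seven, transpose_apply, diagonal_apply]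
  fin_cases i <;> fin_cases j <;> simp [Qmat, QmatLDLFactor, QmatLDLPivots] <;> norm_num

theorem Qmat_posDef : Qmat.PosDef := by
  have hU : IsUnit QmatLDLFactor := (isUnit_iff_isUnit_det _).mpr (by simp [QmatLDLFactor_det])
  rw [Qmat_eq_LDL, ← conjTranspose_eq_transpose_of_trivial]
  exact posDef_conjTranspose_mul_diagonal_mul QmatLDLPivots_pos hU
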